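/- Suppose asset j is dominant and let K ∈ 𝒦 with K_j > 0. Then for every n ≥ 1, the optimality gap satisfies the lower bound g_1* − g_n(K) ≥ (1/n)·(log(1/K_j) + 1 − 1/K_j), where g_1* = E[log(1 + X_j(0))]. -/

import Mathlib

/-!
Write `R_i = R_{n,i}` and `S = Σ K_i R_i ≥ K_j R_j`. The tangent line of `log` at `K_j R_j` gives
`log S ≤ log K_j + log R_j + K_j⁻¹ Σ K_i (R_i / R_j) - 1` pointwise. In expectation,
`E[log R_j] = n g_1*` since the periods are identically distributed, and by independence
`E[R_i / R_j] = E[(1 + X_i(0)) / (1 + X_j(0))]^n ≤ 1` by dominance, so the last sum has expectation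
at most `Σ K_i = 1`. Hence `n g_n(K) ≤ n g_1* + log K_j + 1/K_j - 1`.
-/

open MeasureTheory ProbabilityTheory Filter Finset Real

/-- Compound (total) return of asset `i` over the first `n` periods:
`R_{n,i}(ω) = ∏_{k=0}^{n-1} (1 + X_i(k)(ω))`. -/
noncomputable def compoundReturn {Ω : Type*} {m : ℕ} (X : ℕ → Ω → Fin m → ℝ)
    (n : ℕ) (ω : Ω) (i : Fin m) : ℝ :=
  ∏ k ∈ Finset.range n, (1 + X k ω i)

/-- Expected logarithmic growth with rebalancing period `n`:
`g_n(K) = (1/n) E[log (Kᵀ R_n)]`. -/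
noncomputable def elg {Ω : Type*} [MeasureSpace Ω] {m : ℕ} (X : ℕ → Ω → Fin m → ℝ)
    (n : ℕ) (K : Fin m → ℝ) : ℝ :=
  (n : ℝ)⁻¹ * ∫ ω, Real.log (∑ i, K i * compoundReturn X n ω i)

/-- The admissible set: the unit simplex in `ℝ^m`. -/
def simplex (m : ℕ) : Set (Fin m → ℝ) := {K | (∀ i, 0 ≤ K i) ∧ ∑ i, K i = 1}

theorem Real.log_le_log_add_div_sub_one {x c : ℝ} (hx : 0 < x) (hc : 0 < c) :
    log x ≤ log c + x / c - 1 := by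
  have h := log_le_sub_one_of_pos (div_pos hx hc)
  rw [log_div hx.ne' hc.ne'] at h
  linarith

section Integrals

variable {Ω β : Type*} [MeasurableSpace Ω] [MeasurableSpace β] {μ : Measure Ω}

theorem integrable_log_of_ae_mem_Icc [IsFiniteMeasure μ] {f : Ω → ℝ} (hf : AEMeasurable f μ)
    {a b : ℝ} (ha : 0 < a) (hab : ∀ᵐ ω ∂μ, f ω ∈ Set.Icc a b) :
    Integrable (fun ω => log (f ω)) μ :=
  Integrable.of_mem_Icc (log a) (log b) hf.log <| hab.mono fun _ h =>
    ⟨log_le_log ha h.1, log_le_log (ha.trans_le h.1) h.2⟩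

theorem integral_sum_range_comp_eq_mul {X : ℕ → Ω → β}
    (hident : ∀ k, IdentDistrib (X k) (X 0) μ μ) {f : β → ℝ} (hf : Measurable f)
    (hint : Integrable (fun ω => f (X 0 ω)) μ) (n : ℕ) :
    ∫ ω, ∑ k ∈ range n, f (X k ω) ∂μ = n * ∫ ω, f (X 0 ω) ∂μ := by
  have hint_k : ∀ k, Integrable (fun ω => f (X k ω)) μ := fun k =>
    ((hident k).comp hf).integrable_iff.2 hint
  have hintegral_k : ∀ k, ∫ ω, f (X k ω) ∂μ = ∫ ω, f (X 0 ω) ∂μ := fun k =>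
    ((hident k).comp hf).integral_eq
  simp [integral_finsetSum _ fun k _ => hint_k k, hintegral_k]

theorem integral_prod_range_comp_eq_pow {X : ℕ → Ω → β} (hX : ∀ k, Measurable (X k))
    (hind : iIndepFun X μ) (hident : ∀ k, IdentDistrib (X k) (X 0) μ μ) {f : β → ℝ}
    (hf : Measurable f) (n : ℕ) :
    ∫ ω, ∏ k ∈ range n, f (X k ω) ∂μ = (∫ ω, f (X 0 ω) ∂μ) ^ n := by
  have hprod := (hind.precomp (g := ((↑) : Fin n → ℕ)) Fin.val_injective).integral_fun_prod_comp
    (f := fun _ => f) (fun k => (hX k).aemeasurable) fun _ => hf.aestronglyMeasurable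
  have hintegral_k : ∀ k, ∫ ω, f (X k ω) ∂μ = ∫ ω, f (X 0 ω) ∂μ := fun k =>
    ((hident k).comp hf).integral_eq
  simp_rw [prod_range]
  simp [hprod, hintegral_k]

end Integrals

theorem Real.log_sum_le_log_add_sum_div {ι : Type*} [Fintype ι] {K r : ι → ℝ}
    (hK : ∀ i, 0 ≤ K i) {j : ι} (hKj : 0 < K j) (hr : ∀ i, 0 < r i) :
    log (∑ i, K i * r i) ≤ log (K j) + log (r j) + (K j)⁻¹ * ∑ i, K i * (r i / r j) - 1 := by
  have hKr : K j * r j ≤ ∑ i, K i * r i :=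
    single_le_sum (f := fun i => K i * r i) (fun i _ => mul_nonneg (hK i) (hr i).le) (mem_univ j)
  have h := log_le_log_add_div_sub_one ((mul_pos hKj (hr j)).trans_le hKr) (mul_pos hKj (hr j))
  have hsum : (∑ i, K i * r i) / (K j * r j) = (K j)⁻¹ * ∑ i, K i * (r i / r j) := by
    rw [mul_sum, sum_div]
    refine sum_congr rfl fun i _ => ?_
    field_simp [(hr j).ne']
  rwa [log_mul hKj.ne' (hr j).ne', hsum] at h

section CompoundReturn

variable {Ω : Type*} {m : ℕ} {X : ℕ → Ω → Fin m → ℝ}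

theorem compoundReturn_pos {ω : Ω} {i : Fin m} (h : ∀ k, 0 < 1 + X k ω i) (n : ℕ) :
    0 < compoundReturn X n ω i :=
  prod_pos fun k _ => h k

theorem compoundReturn_mem_Icc {ω : Ω} {i : Fin m} {a b : ℝ} (ha : -1 ≤ a)
    (h : ∀ k, a ≤ X k ω i ∧ X k ω i ≤ b) (n : ℕ) :
    compoundReturn X n ω i ∈ Set.Icc ((1 + a) ^ n) ((1 + b) ^ n) := by
  constructor
  · simpa [compoundReturn] using prod_le_prod (s := range n) (f := fun _ => 1 + a)
      (fun _ _ => by linarith) fun k _ => by linarith [h k]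
  · simpa [compoundReturn] using prod_le_prod (s := range n) (g := fun _ => 1 + b)
      (fun k _ => by linarith [h k]) fun k _ => by linarith [h k]

theorem log_compoundReturn {ω : Ω} {i : Fin m} (h : ∀ k, 0 < 1 + X k ω i) (n : ℕ) :
    log (compoundReturn X n ω i) = ∑ k ∈ range n, log (1 + X k ω i) :=
  log_prod fun k _ => (h k).ne'

theorem compoundReturn_div (n : ℕ) (ω : Ω) (i j : Fin m) :
    compoundReturn X n ω i / compoundReturn X n ω j =
      ∏ k ∈ range n, (1 + X k ω i) / (1 + X k ω j) :=
  (prod_div_distrib ..).symm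

theorem measurable_compoundReturn [MeasurableSpace Ω] (hX : ∀ k, Measurable (X k)) (n : ℕ)
    (i : Fin m) : Measurable fun ω => compoundReturn X n ω i := by
  unfold compoundReturn
  fun_prop

end CompoundReturn

theorem sum_mul_le_one_of_mem_simplex {m : ℕ} {K c : Fin m → ℝ} (hK : K ∈ simplex m)
    (hc : ∀ i, c i ≤ 1) : ∑ i, K i * c i ≤ 1 :=
  calc ∑ i, K i * c i ≤ ∑ i, K i := sum_le_sum fun i _ => mul_le_of_le_one_right (hK.1 i) (hc i)
    _ = 1 := hK.2

section Portfolio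

variable {Ω : Type*} [MeasurableSpace Ω] {μ : Measure Ω} {m : ℕ} {X : ℕ → Ω → Fin m → ℝ}

theorem integral_log_compoundReturn (hident : ∀ k, IdentDistrib (X k) (X 0) μ μ) {i : Fin m}
    (hint : Integrable (fun ω => log (1 + X 0 ω i)) μ) (hpos : ∀ᵐ ω ∂μ, ∀ k, 0 < 1 + X k ω i)
    (n : ℕ) : ∫ ω, log (compoundReturn X n ω i) ∂μ = n * ∫ ω, log (1 + X 0 ω i) ∂μ := by
  rw [integral_congr_ae (hpos.mono fun ω h => log_compoundReturn h n)]
  exact integral_sum_range_comp_eq_mul hident (f := fun v => log (1 + v i)) (by fun_prop) hint n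

theorem integral_compoundReturn_div_le_one (hX : ∀ k, Measurable (X k)) (hind : iIndepFun X μ)
    (hident : ∀ k, IdentDistrib (X k) (X 0) μ μ) (hpos : ∀ᵐ ω ∂μ, ∀ i, 0 < 1 + X 0 ω i)
    {j : Fin m} (hdom : ∀ i, i ≠ j → ∫ ω, (1 + X 0 ω i) / (1 + X 0 ω j) ∂μ ≤ 1)
    (n : ℕ) (i : Fin m) :
    ∫ ω, compoundReturn X n ω i / compoundReturn X n ω j ∂μ ≤ 1 := by
  simp_rw [compoundReturn_div]
  rw [integral_prod_range_comp_eq_pow hX hind hident (f := fun v => (1 + v i) / (1 + v j))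
    (by fun_prop)]
  refine pow_le_one₀ (integral_nonneg_of_ae (hpos.mono fun ω h => (div_pos (h i) (h j)).le)) ?_
  rcases eq_or_ne i j with rfl | hij
  · have := hind.isProbabilityMeasure
    simp [integral_congr_ae (hpos.mono fun ω h => div_self (h i).ne')]
  · exact hdom i hij

section Bounded

variable {Xmin Xmax : Fin m → ℝ}

theorem ae_compoundReturn_mem_Icc (hXmin : ∀ i, -1 ≤ Xmin i)
    (hbdd : ∀ᵐ ω ∂μ, ∀ k i, Xmin i ≤ X k ω i ∧ X k ω i ≤ Xmax i) (n : ℕ) :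
    ∀ᵐ ω ∂μ, ∀ i, compoundReturn X n ω i ∈ Set.Icc ((1 + Xmin i) ^ n) ((1 + Xmax i) ^ n) :=
  hbdd.mono fun _ h i => compoundReturn_mem_Icc (hXmin i) (fun k => h k i) n

variable [IsFiniteMeasure μ]

theorem integrable_compoundReturn_div (hX : ∀ k, Measurable (X k)) (hXmin : ∀ i, -1 < Xmin i)
    (hbdd : ∀ᵐ ω ∂μ, ∀ k i, Xmin i ≤ X k ω i ∧ X k ω i ≤ Xmax i) (n : ℕ) (i j : Fin m) :
    Integrable (fun ω => compoundReturn X n ω i / compoundReturn X n ω j) μ := by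
  have ha : ∀ i, 0 < (1 + Xmin i) ^ n := fun i => pow_pos (by linarith [hXmin i]) n
  refine Integrable.of_mem_Icc 0 ((1 + Xmax i) ^ n / (1 + Xmin j) ^ n)
    ((measurable_compoundReturn hX n i).div (measurable_compoundReturn hX n j)).aemeasurable
    ((ae_compoundReturn_mem_Icc (fun i => (hXmin i).le) hbdd n).mono fun ω h => ⟨?_, ?_⟩)
  · exact div_nonneg ((ha i).le.trans (h i).1) ((ha j).le.trans (h j).1)
  · exact div_le_div₀ ((ha i).le.trans ((h i).1.trans (h i).2)) (h i).2 (ha j) (h j).1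

theorem integrable_log_portfolio (hX : ∀ k, Measurable (X k)) (hXmin : ∀ i, -1 < Xmin i)
    (hbdd : ∀ᵐ ω ∂μ, ∀ k i, Xmin i ≤ X k ω i ∧ X k ω i ≤ Xmax i) {K : Fin m → ℝ}
    (hK : ∀ i, 0 ≤ K i) {j : Fin m} (hKj : 0 < K j) (n : ℕ) :
    Integrable (fun ω => log (∑ i, K i * compoundReturn X n ω i)) μ := by
  have ha : ∀ i, 0 < (1 + Xmin i) ^ n := fun i => pow_pos (by linarith [hXmin i]) n
  have hR_meas := measurable_compoundReturn hX n
  refine integrable_log_of_ae_mem_Icc (b := ∑ i, K i * (1 + Xmax i) ^ n) (by fun_prop)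
    (mul_pos hKj (ha j))
    ((ae_compoundReturn_mem_Icc (fun i => (hXmin i).le) hbdd n).mono fun ω h => ⟨?_, ?_⟩)
  · exact (mul_le_mul_of_nonneg_left (h j).1 (hK j)).trans <|
      single_le_sum (f := fun i => K i * compoundReturn X n ω i)
        (fun i _ => mul_nonneg (hK i) ((ha i).le.trans (h i).1)) (mem_univ j)
  · exact sum_le_sum fun i _ => mul_le_mul_of_nonneg_left (h i).2 (hK i)

end Bounded

theorem integral_log_portfolio_le [IsProbabilityMeasure μ] (hX : ∀ k, Measurable (X k))
    (hind : iIndepFun X μ) (hident : ∀ k, IdentDistrib (X k) (X 0) μ μ)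
    {Xmin Xmax : Fin m → ℝ} (hXmin : ∀ i, -1 < Xmin i)
    (hbdd : ∀ᵐ ω ∂μ, ∀ k i, Xmin i ≤ X k ω i ∧ X k ω i ≤ Xmax i) {j : Fin m}
    (hdom : ∀ i, i ≠ j → ∫ ω, (1 + X 0 ω i) / (1 + X 0 ω j) ∂μ ≤ 1)
    {K : Fin m → ℝ} (hK : K ∈ simplex m) (hKj : 0 < K j) (n : ℕ) :
    ∫ ω, log (∑ i, K i * compoundReturn X n ω i) ∂μ ≤
      log (K j) + n * ∫ ω, log (1 + X 0 ω j) ∂μ + (K j)⁻¹ - 1 := by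
  have hpos : ∀ᵐ ω ∂μ, ∀ k i, 0 < 1 + X k ω i :=
    hbdd.mono fun ω h k i => by linarith [hXmin i, (h k i).1]
  have hlogR : Integrable (fun ω => log (compoundReturn X n ω j)) μ :=
    integrable_log_of_ae_mem_Icc (measurable_compoundReturn hX n j).aemeasurable
      (pow_pos (by linarith [hXmin j]) n)
      ((ae_compoundReturn_mem_Icc (fun i => (hXmin i).le) hbdd n).mono fun _ h => h j)
  have hlogX : Integrable (fun ω => log (1 + X 0 ω j)) μ :=
    integrable_log_of_ae_mem_Icc (a := 1 + Xmin j) (b := 1 + Xmax j) (by fun_prop)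
      (by linarith [hXmin j])
      (hbdd.mono fun ω h => ⟨by linarith [(h 0 j).1], by linarith [(h 0 j).2]⟩)
  have hratio := integrable_compoundReturn_div hX hXmin hbdd n
  have hsum : Integrable
      (fun ω => ∑ i, K i * (compoundReturn X n ω i / compoundReturn X n ω j)) μ :=
    integrable_finsetSum _ fun i _ => (hratio i j).const_mul (K i)
  calc ∫ ω, log (∑ i, K i * compoundReturn X n ω i) ∂μ
      ≤ ∫ ω, (log (K j) + log (compoundReturn X n ω j) +
          (K j)⁻¹ * ∑ i, K i * (compoundReturn X n ω i / compoundReturn X n ω j) - 1) ∂μ :=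
        integral_mono_ae (integrable_log_portfolio hX hXmin hbdd hK.1 hKj n) (by fun_prop)
          (hpos.mono fun ω h => log_sum_le_log_add_sum_div hK.1 hKj
            fun i => compoundReturn_pos (fun k => h k i) n)
    _ = log (K j) + n * ∫ ω, log (1 + X 0 ω j) ∂μ +
          (K j)⁻¹ * ∑ i, K i * ∫ ω, compoundReturn X n ω i / compoundReturn X n ω j ∂μ - 1 := by
        rw [integral_sub (by fun_prop) (by fun_prop), integral_add (by fun_prop) (by fun_prop),
          integral_add (by fun_prop) hlogR, integral_const_mul,
          integral_finsetSum _ fun i _ => (hratio i j).const_mul (K i),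
          integral_log_compoundReturn hident hlogX (hpos.mono fun ω h k => h k j)]
        simp [integral_const_mul]
    _ ≤ log (K j) + n * ∫ ω, log (1 + X 0 ω j) ∂μ + (K j)⁻¹ * 1 - 1 := by
        gcongr
        exact sum_mul_le_one_of_mem_simplex hK fun i => integral_compoundReturn_div_le_one hX
          hind hident (hpos.mono fun ω h => h 0) hdom n i
    _ = _ := by rw [mul_one]

end Portfolio

theorem buy_and_hold_gap_lower_bound_general
    {Ω : Type*} [MeasureSpace Ω] [IsProbabilityMeasure (ℙ : Measure Ω)]
    {m : ℕ}
    (X : ℕ → Ω → Fin m → ℝ)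
    (hmeas : ∀ k, Measurable (X k))
    (hiid : iIndepFun X ℙ)
    (hident : ∀ k, IdentDistrib (X k) (X 0) ℙ ℙ)
    (Xmin Xmax : Fin m → ℝ)
    (hXmin : ∀ i, -1 < Xmin i)
    (hbdd : ∀ k, ∀ᵐ ω ∂(ℙ : Measure Ω), ∀ i, Xmin i ≤ X k ω i ∧ X k ω i ≤ Xmax i)
    (j : Fin m)
    (hdom : ∀ i, i ≠ j → ∫ ω, (1 + X 0 ω i) / (1 + X 0 ω j) ≤ 1)
    (K : Fin m → ℝ) (hK : K ∈ simplex m) (hKj : 0 < K j) :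
    ∀ n : ℕ, 1 ≤ n →
      (n : ℝ)⁻¹ * (Real.log (1 / K j) + 1 - 1 / K j) ≤
        (∫ ω, Real.log (1 + X 0 ω j)) - elg X n K := by
  intro n hn
  have hn' : (0 : ℝ) < n := by exact_mod_cast hn
  have hlog := integral_log_portfolio_le hmeas hiid hident hXmin (ae_all_iff.2 hbdd) hdom hK hKj n
  set g := ∫ ω, log (1 + X 0 ω j)
  have hscaled : (n : ℝ)⁻¹ * (log (1 / K j) + 1 - 1 / K j) =
      g - (n : ℝ)⁻¹ * (log (K j) + n * g + (K j)⁻¹ - 1) := by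
    rw [one_div, log_inv]
    field_simp
    ring
  rw [hscaled, elg]
  gcongr

/-- Lower bound on the optimality gap of buy and hold with a dominant asset:
`g_1^* - g_n(K) ≥ (1/n) (log(1/K_j) + 1 - 1/K_j)`. -/
theorem buy_and_hold_gap_lower_bound
    {Ω : Type*} [MeasureSpace Ω] [IsProbabilityMeasure (ℙ : Measure Ω)]
    {m : ℕ} (hm : 2 ≤ m)
    (X : ℕ → Ω → Fin m → ℝ)
    (hmeas : ∀ k, Measurable (X k))
    (hiid : iIndepFun X ℙ)
    (hident : ∀ k, IdentDistrib (X k) (X 0) ℙ ℙ)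
    (Xmin Xmax : Fin m → ℝ)
    (hXmin : ∀ i, -1 < Xmin i)
    (hbdd : ∀ k, ∀ᵐ ω ∂(ℙ : Measure Ω), ∀ i, Xmin i ≤ X k ω i ∧ X k ω i ≤ Xmax i)
    (j : Fin m)
    (hdom : ∀ i, i ≠ j → ∫ ω, (1 + X 0 ω i) / (1 + X 0 ω j) ≤ 1)
    (K : Fin m → ℝ) (hK : K ∈ simplex m) (hKj : 0 < K j) :
    ∀ n : ℕ, 1 ≤ n →
      (n : ℝ)⁻¹ * (Real.log (1 / K j) + 1 - 1 / K j) ≤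
        (∫ ω, Real.log (1 + X 0 ω j)) - elg X n K :=
  buy_and_hold_gap_lower_bound_general X hmeas hiid hident Xmin Xmax hXmin hbdd j hdom K hK hKj
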